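/- arXiv:1811.05707 — 2 statements merged into one kernel-verified Lean document; each statement's English description precedes it below -/
import Mathlib

section
/- For every integer k ≥ 1, the identity (1-p)^{4k-2} · R_k(p) = p^{2k} · (\sum_{i=0}^{k-1} D(k-1-i, i) p^i)^2 holds in ℤ[[p]], where R_k(p) is the formal power series whose coefficient of p^m equals r_{k,m}. (Equivalently, the generating function of plateau polycubes of width k according to the lateral area satisfies R_k(p) = C_{k-1}(p)^2, where C_k(p) = p^{k+1}/(1-p)^{2k+1} · \sum_{i=0}^{k} D(k-i, i) p^i.) -/
/-- Integer binomial coefficient with the convention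
`C(a,b) = a!/(b!(a-b)!)` if `0 ≤ b ≤ a` and `C(a,b) = 0` otherwise. -/
def ichoose (a b : ℤ) : ℤ := if 0 ≤ b ∧ b ≤ a then (a.toNat.choose b.toNat : ℤ) else 0

/-- The Delannoy numbers `D(n,m) = ∑_{k=0}^m C(m,k) C(n+m-k, m)`. -/
def delannoy (n m : ℕ) : ℕ :=
  ∑ k ∈ Finset.range (m + 1), Nat.choose m k * Nat.choose (n + m - k) m

/-- `h k n = ∑_{i=0}^{k-1} D(k-1-i, i) C(n-i+k-2, 2k-2)` is the number of
column-convex polyominoes with `k` columns and area `n`. -/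
def ccPoly (k n : ℕ) : ℤ :=
  ∑ i ∈ Finset.range k,
    (delannoy (k - 1 - i) i : ℤ) * ichoose ((n : ℤ) - i + k - 2) (2 * (k : ℤ) - 2)

/-- `r k m = ∑_{i=k}^{m-k} h_{k,i} h_{k,m-i}` is the number of plateau polycubes
of width `k` and lateral area `m`. -/
def plateau (k m : ℕ) : ℤ :=
  ∑ i ∈ Finset.Icc k (m - k), ccPoly k i * ccPoly k (m - i)

/-!
Since `h_{k,n}` vanishes for `n < k`, the truncated convolution defining `r_{k,m}` is the full
coefficient of `H_k(p)²`, where `H_k(p) = ∑ₙ h_{k,n} pⁿ`. The binomial `C(n - i + k - 2, 2k - 2)`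
is the coefficient of `pⁿ` in `p^{k+i} / (1-p)^{2k-1}`, so `(1-p)^{2k-1} H_k(p)` is the polynomial
`p^k ∑ᵢ D(k-1-i, i) pⁱ`; squaring gives the identity.
-/

open PowerSeries Finset

theorem PowerSeries.coeff_mul_eq_sum_Icc {R : Type*} [Semiring R] {φ ψ : R⟦X⟧} {a b : ℕ}
    (hφ : ∀ i < a, coeff i φ = 0) (hψ : ∀ j < b, coeff j ψ = 0) (m : ℕ) :
    coeff m (φ * ψ) = ∑ i ∈ Icc a (m - b), coeff i φ * coeff (m - i) ψ := by
  rw [coeff_mul, Nat.sum_antidiagonal_eq_sum_range_succ_mk]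
  symm
  refine sum_subset (fun i hi => ?_) fun i hi hi' => ?_
  · simp only [mem_Icc, mem_range] at hi ⊢
    omega
  · simp only [mem_Icc, mem_range, not_and_or, not_le] at hi hi'
    rcases hi' with hia | hib
    · rw [hφ i hia, zero_mul]
    · rw [hψ (m - i) (by omega), mul_zero]

theorem mk_ichoose_eq_X_pow_mul_invOneSubPow (a d : ℕ) :
    (mk fun n : ℕ => ichoose ((n : ℤ) - a + d) d : ℤ⟦X⟧)
      = X ^ a * (invOneSubPow ℤ (d + 1)).val := by
  ext n
  rw [coeff_mk, coeff_X_pow_mul', invOneSubPow_val_succ_eq_mk_add_choose, ichoose]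
  split_ifs
  · rw [coeff_mk, add_comm d]
    congr 2; omega
  · omega
  · omega
  · rfl

theorem one_sub_X_pow_mul_mk_ichoose (a d : ℕ) :
    (1 - X : ℤ⟦X⟧) ^ (d + 1) * mk (fun n : ℕ => ichoose ((n : ℤ) - a + d) d) = X ^ a := by
  rw [mk_ichoose_eq_X_pow_mul_invOneSubPow, mul_left_comm,
    ← invOneSubPow_inv_eq_one_sub_pow, (invOneSubPow ℤ (d + 1)).inv_val, mul_one]

theorem ccPoly_eq_zero_of_lt {k n : ℕ} (hn : n < k) : ccPoly k n = 0 :=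
  sum_eq_zero fun i hi => by
    rw [ichoose, if_neg, mul_zero]
    simp only [mem_range] at hi
    omega

theorem mk_plateau_eq_sq (k : ℕ) :
    (mk fun m => plateau k m : ℤ⟦X⟧) = (mk fun n => ccPoly k n) ^ 2 := by
  have hvanish : ∀ n < k, coeff n (mk fun n => ccPoly k n) = 0 := fun n hn => by
    rw [coeff_mk, ccPoly_eq_zero_of_lt hn]
  ext m
  simp only [sq, coeff_mul_eq_sum_Icc hvanish hvanish, coeff_mk, plateau]

theorem one_sub_X_pow_mul_mk_ccPoly {k : ℕ} (hk : 1 ≤ k) :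
    (1 - X : ℤ⟦X⟧) ^ (2 * k - 1) * mk (fun n => ccPoly k n)
      = X ^ k * ∑ i ∈ range k, (delannoy (k - 1 - i) i : ℤ⟦X⟧) * X ^ i := by
  have hmk : (mk fun n => ccPoly k n) = ∑ i ∈ range k, (delannoy (k - 1 - i) i : ℤ⟦X⟧) *
      mk (fun n : ℕ => ichoose ((n : ℤ) - (k + i : ℕ) + (2 * k - 2 : ℕ)) (2 * k - 2 : ℕ)) := by
    ext n
    simp only [ccPoly, coeff_mk, map_sum, ← map_natCast (C (R := ℤ)), coeff_C_mul]
    refine sum_congr rfl fun i _ => ?_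
    congr 2 <;> omega
  rw [hmk, mul_sum, mul_sum]
  refine sum_congr rfl fun i _ => ?_
  rw [mul_left_comm, show 2 * k - 1 = (2 * k - 2) + 1 by omega, one_sub_X_pow_mul_mk_ichoose,
    pow_add, mul_left_comm]

/-- The generating function of plateau polycubes of width `k` by lateral area satisfies
`(1-p)^{4k-2} R_k(p) = p^{2k} (∑_{i=0}^{k-1} D_{k-1-i,i} pⁱ)²` in `ℤ[[p]]`;
equivalently `R_k(p) = C_{k-1}(p)²` with `C_k(p) = p^{k+1}/(1-p)^{2k+1} ∑_{i=0}^{k} D_{k-i,i} pⁱ`. -/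
theorem plateau_gf (k : ℕ) (hk : 1 ≤ k) :
    (1 - PowerSeries.X : PowerSeries ℤ) ^ (4 * k - 2) * PowerSeries.mk (fun m => plateau k m)
      = PowerSeries.X ^ (2 * k) *
          (∑ i ∈ Finset.range k,
            (delannoy (k - 1 - i) i : PowerSeries ℤ) * PowerSeries.X ^ i) ^ 2 := by
  rw [mk_plateau_eq_sq, show 4 * k - 2 = (2 * k - 1) * 2 by omega, pow_mul, ← mul_pow,
    one_sub_X_pow_mul_mk_ccPoly hk, mul_pow, ← pow_mul, mul_comm k 2]
end

section
/- For every integer k ≥ 3, h_{k,k+2} = 8k^2 - 19k + 16; that is, the number of column-convex polyominoes with k columns and area k+2 equals 8k^2 - 19k + 16. -/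
open Finset

lemma ichoose_natCast (a b : ℕ) : ichoose a b = (a.choose b : ℤ) := by
  unfold ichoose
  split_ifs with h
  · simp
  · rw [Nat.choose_eq_zero_of_lt (by omega), Nat.cast_zero]

lemma ichoose_eq_zero_of_lt {a b : ℤ} (h : a < b) : ichoose a b = 0 :=
  if_neg fun hb => by omega

lemma delannoy_zero_right (n : ℕ) : delannoy n 0 = 1 := by
  simp [delannoy]

lemma delannoy_one_right (n : ℕ) : delannoy n 1 = 2 * n + 1 := by
  simp only [delannoy, Nat.reduceAdd, Nat.choose_one_right, sum_range_succ, range_one,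
    sum_singleton, Nat.choose_succ_self_right, zero_add, tsub_zero, one_mul, Nat.choose_self,
    add_tsub_cancel_right]
  omega

lemma delannoy_two_right (n : ℕ) : delannoy n 2 = 2 * n ^ 2 + 2 * n + 1 := by
  apply Nat.cast_injective (R := ℚ)
  simp only [delannoy, Nat.reduceAdd, sum_range_succ, range_one, sum_singleton,
    Nat.choose_zero_right, tsub_zero, one_mul, Nat.choose_succ_self_right, Nat.add_one_sub_one,
    Nat.choose_self, add_tsub_cancel_right, Nat.cast_add, Nat.cast_choose_two, Nat.cast_ofNat,
    Nat.cast_mul, Nat.cast_one, Nat.cast_pow]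
  ring

theorem ccPoly_add_of_lt {k j : ℕ} (hj : j < k) :
    ccPoly k (k + j) = ∑ i ∈ range (j + 1),
      (delannoy (k - 1 - i) i : ℤ) * ((2 * k - 2 + j - i).choose (2 * k - 2) : ℕ) := by
  rw [ccPoly, ← sum_subset (range_subset_range.mpr hj) fun i _ hi => ?_]
  · refine sum_congr rfl fun i hi => ?_
    rw [mem_range] at hi
    rw [← ichoose_natCast]
    congr 2 <;> omega
  · rw [mem_range] at hi
    rw [ichoose_eq_zero_of_lt (by omega), mul_zero]

/-- The number of column-convex polyominoes with `k` columns and area `k+2` is `8k²-19k+16`. -/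
theorem ccPoly_area_width_add_two (k : ℕ) (hk : 3 ≤ k) :
    ccPoly k (k + 2) = 8 * (k : ℤ) ^ 2 - 19 * (k : ℤ) + 16 := by
  obtain ⟨m, rfl⟩ : ∃ m, k = m + 3 := ⟨k - 3, by omega⟩
  rw [ccPoly_add_of_lt (by omega), show 2 * (m + 3) - 2 = 2 * m + 4 by omega]
  simp only [sum_range_succ, sum_range_zero, zero_add, Nat.sub_zero, Nat.reduceSubDiff]
  rw [Nat.choose_symm_add, Nat.choose_succ_self_right, Nat.choose_self, delannoy_zero_right,
    delannoy_one_right, delannoy_two_right]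
  qify
  rw [Nat.cast_choose_two]
  push_cast
  ring
end
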